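/- Order the conjugate roots λ_{k,j} (j = 1,…,m_k) of each branch k by the lexicographic order on the sequences (arg(a_α(k,j)) : α ∈ Λ_{P,k}) with arg taking values in [0, 2π), and assume λ_{k,1} is minimal for this order among the roots of branch k. Then for two distinct branches k₁ ≠ k₂: max over i,j of O(λ_{k₁,i}, λ_{k₂,j}) equals O(λ_{k₁,1}, λ_{k₂,1}). -/

import Mathlib

/-!
Suppose some pair `λ_{1,i}, λ_{2,j}` agreed up to and including the index `N` at which
`λ_{1,1}` and `λ_{2,1}` first differ. Conjugating that pair by a common root of unity turns
`λ_{1,i}` into `λ_{1,1}` and `λ_{2,j}` into some conjugate `λ_{2,j'}`, which therefore agrees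
with `λ_{1,1}`, hence with `λ_{2,1}`, below `N` and differs from `λ_{2,1}` at `N`. Minimality
of `λ_{2,1}` in the lexicographic order of arguments then forces
`arg₂π (a₂(N) Θᴺ) < arg₂π (a₁(N) Θᴺ)`, and the same argument with the branches exchanged gives
the reverse inequality.
-/

open Complex

/-- The argument of a complex number taken in `[0, 2π)`. -/
noncomputable def arg2pi (z : ℂ) : ℝ :=
  if Complex.arg z < 0 then Complex.arg z + 2 * Real.pi else Complex.arg z

/-- Lexicographic (strict) order on sequences of reals indexed by exponents. -/
def ArgLexLt (s t : ℕ → ℝ) : Prop :=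
  ∃ n, s n < t n ∧ ∀ k < n, s k = t k

lemma lt_of_not_argLexLt {s t : ℕ → ℝ} (h : ¬ ArgLexLt s t) {N : ℕ}
    (hagree : ∀ k < N, s k = t k) (hne : s N ≠ t N) : t N < s N :=
  (le_of_not_gt fun hlt => h ⟨N, hlt, hagree⟩).lt_of_ne hne.symm

lemma arg_eq_of_arg2pi_eq {z w : ℂ} (h : arg2pi z = arg2pi w) : z.arg = w.arg := by
  unfold arg2pi at h
  have := neg_pi_lt_arg z
  have := arg_le_pi z
  have := neg_pi_lt_arg w
  have := arg_le_pi w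
  split_ifs at h <;> linarith [Real.pi_pos]

lemma eq_of_norm_eq_of_arg2pi_eq {z w : ℂ} (hnorm : ‖z‖ = ‖w‖) (harg : arg2pi z = arg2pi w) :
    z = w :=
  ext_norm_arg hnorm (arg_eq_of_arg2pi_eq harg)

lemma norm_exp_two_pi_I_div (M : ℕ) : ‖exp (2 * Real.pi * I / M)‖ = 1 := by
  rw [show 2 * (Real.pi : ℂ) * I / M = ((2 * Real.pi / M : ℝ) : ℂ) * I by push_cast; ring]
  exact norm_exp_ofReal_mul_I _

lemma exp_two_pi_I_div_pow_self (M : ℕ) : exp (2 * Real.pi * I / M) ^ M = 1 := by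
  rcases Nat.eq_zero_or_pos M with rfl | hM
  · exact pow_zero _
  · exact (isPrimitiveRoot_exp M hM.ne').pow_eq_one

lemma pow_mul_eq_one_of_dvd {G : Type*} [Monoid G] {ζ : G} {M m n : ℕ} (hζ : ζ ^ M = 1)
    (hm : m ∣ M) (hn : M / m ∣ n) : ζ ^ (m * n) = 1 := by
  obtain ⟨t, rfl⟩ := hn
  rw [← mul_assoc, Nat.mul_div_cancel' hm, pow_mul, hζ, one_pow]

/-- As `(j + i (m - 1)) % m + 1 ≡ j + 1 - i (mod m)`, this is `h` multiplied by `u ^ (1 - i)`. -/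
lemma mul_pow_shift_eq {G : Type*} [CommMonoid G] {u x y : G} {m : ℕ} (hm : 0 < m)
    (hu : u ^ m = 1) {i j : ℕ} (h : x * u ^ i = y * u ^ j) :
    y * u ^ ((j + i * (m - 1)) % m + 1) = x * u := by
  obtain ⟨k, rfl⟩ : ∃ k, m = k + 1 := ⟨m - 1, by omega⟩
  calc y * u ^ ((j + i * (k + 1 - 1)) % (k + 1) + 1)
      = y * u ^ j * u ^ (i * k) * u := by
        rw [pow_succ, ← pow_eq_pow_mod _ hu, pow_add, add_tsub_cancel_right]
        ac_rfl
    _ = x * u * (u ^ (k + 1)) ^ i := by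
        rw [← h, ← pow_mul, show (k + 1) * i = i + i * k by ring, pow_add]
        ac_rfl
    _ = x * u := by rw [hu, one_pow, mul_one]

lemma exists_conj_eq_of_eq {K : Type*} [CommMonoidWithZero K] [NoZeroDivisors K] {ζ : K}
    (hζ : ζ ≠ 0) {a b : ℕ → K} {m : ℕ} (hm : 0 < m) (hb : ∀ n, b n ≠ 0 → ζ ^ (m * n) = 1)
    (i j : ℕ) :
    ∃ j', 1 ≤ j' ∧ j' ≤ m ∧
      ∀ n, a n * ζ ^ (i * n) = b n * ζ ^ (j * n) → b n * ζ ^ (j' * n) = a n * ζ ^ (1 * n) := by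
  refine ⟨(j + i * (m - 1)) % m + 1, by omega, Nat.mod_lt _ hm, fun n h => ?_⟩
  by_cases hbn : b n = 0
  · have han : a n = 0 := by
      rw [hbn, zero_mul] at h
      exact (mul_eq_zero.mp h).resolve_right (pow_ne_zero _ hζ)
    simp [han, hbn]
  · have hu : (ζ ^ n) ^ m = 1 := by rw [← pow_mul', hb n hbn]
    simp only [pow_mul'] at h ⊢
    rw [pow_one]
    exact mul_pow_shift_eq hm hu h

noncomputable def argSeq (a : ℕ → ℂ) (ζ : ℂ) (j n : ℕ) : ℝ :=
  if a n = 0 then 0 else arg2pi (a n * ζ ^ (j * n))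

lemma arg2pi_lt_of_eq_conj {ζ : ℂ} (hζ : ‖ζ‖ = 1) {a b : ℕ → ℂ} {m : ℕ}
    (hb : ∀ n, b n ≠ 0 → ζ ^ (m * n) = 1)
    (hmin : ∀ j, 1 ≤ j → j ≤ m → ¬ ArgLexLt (argSeq b ζ j) (argSeq b ζ 1))
    (hm : 0 < m) {i j N : ℕ}
    (hagree : ∀ n ≤ N, a n * ζ ^ (i * n) = b n * ζ ^ (j * n))
    (hpre : ∀ n < N, a n = b n) (hN : a N ≠ b N) :
    arg2pi (b N * ζ ^ (1 * N)) < arg2pi (a N * ζ ^ (1 * N)) := by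
  have hζ0 : ζ ≠ 0 := norm_ne_zero_iff.mp (by rw [hζ]; exact one_ne_zero)
  obtain ⟨j', hj'1, hj'm, hconj⟩ := exists_conj_eq_of_eq hζ0 hm hb i j
  have hconj' : ∀ n ≤ N, b n * ζ ^ (j' * n) = a n * ζ ^ (1 * n) :=
    fun n hn => hconj n (hagree n hn)
  have hbN : b N ≠ 0 := by
    intro h0
    have := hconj' N le_rfl
    rw [h0, zero_mul, eq_comm, mul_eq_zero] at this
    exact hN (by rw [h0, this.resolve_right (pow_ne_zero _ hζ0)])
  have hbefore : ∀ k < N, argSeq b ζ j' k = argSeq b ζ 1 k := fun k hk => by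
    simp only [argSeq, hconj' k hk.le, hpre k hk]
  have hat : argSeq b ζ j' N ≠ argSeq b ζ 1 N := by
    simp only [argSeq, if_neg hbN]
    refine fun h => hN (mul_right_cancel₀ (pow_ne_zero (1 * N) hζ0) ?_)
    rw [← hconj' N le_rfl]
    exact eq_of_norm_eq_of_arg2pi_eq (by simp [hζ]) h
  simpa only [argSeq, if_neg hbN, hconj' N le_rfl] using
    lt_of_not_argLexLt (hmin j' hj'1 hj'm) hbefore hat

theorem stmt_3_general (M m₁ m₂ : ℕ)
    (hd₁ : m₁ ∣ M) (hd₂ : m₂ ∣ M)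
    (a₁ a₂ : ℕ → ℂ)
    (hsupp₁ : ∀ n, ¬ (M / m₁ ∣ n) → a₁ n = 0)
    (hsupp₂ : ∀ n, ¬ (M / m₂ ∣ n) → a₂ n = 0)
    (Θ : ℂ) (hΘ : Θ = Complex.exp (2 * Real.pi * Complex.I / M))
    -- the two branches are distinct: every pair of roots differs somewhere
    (hdist : ∀ i j, 1 ≤ i → i ≤ m₁ → 1 ≤ j → j ≤ m₂ →
      ∃ n, a₁ n * Θ ^ (i * n) ≠ a₂ n * Θ ^ (j * n))
    -- `λ_{k,1}` is minimal for the lexicographic order on argument sequences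
    (hmin₁ : ∀ j, 1 ≤ j → j ≤ m₁ →
      ¬ ArgLexLt (fun n => if a₁ n = 0 then 0 else arg2pi (a₁ n * Θ ^ (j * n)))
        (fun n => if a₁ n = 0 then 0 else arg2pi (a₁ n * Θ ^ (1 * n))))
    (hmin₂ : ∀ j, 1 ≤ j → j ≤ m₂ →
      ¬ ArgLexLt (fun n => if a₂ n = 0 then 0 else arg2pi (a₂ n * Θ ^ (j * n)))
        (fun n => if a₂ n = 0 then 0 else arg2pi (a₂ n * Θ ^ (1 * n)))) :
    ∀ i j, 1 ≤ i → i ≤ m₁ → 1 ≤ j → j ≤ m₂ →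
      sInf {n | a₁ n * Θ ^ (i * n) ≠ a₂ n * Θ ^ (j * n)} ≤
        sInf {n | a₁ n * Θ ^ (1 * n) ≠ a₂ n * Θ ^ (1 * n)} := by
  intro i j hi him hj hjm
  have hΘM : Θ ^ M = 1 := hΘ ▸ exp_two_pi_I_div_pow_self M
  have hΘ1 : ‖Θ‖ = 1 := hΘ ▸ norm_exp_two_pi_I_div M
  have hΘ0 : Θ ≠ 0 := hΘ ▸ exp_ne_zero _
  have hu₁ : ∀ n, a₁ n ≠ 0 → Θ ^ (m₁ * n) = 1 := fun n h =>
    pow_mul_eq_one_of_dvd hΘM hd₁ (not_not.mp (mt (hsupp₁ n) h))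
  have hu₂ : ∀ n, a₂ n ≠ 0 → Θ ^ (m₂ * n) = 1 := fun n h =>
    pow_mul_eq_one_of_dvd hΘM hd₂ (not_not.mp (mt (hsupp₂ n) h))
  set N := sInf {n | a₁ n * Θ ^ (1 * n) ≠ a₂ n * Θ ^ (1 * n)}
  have hN : a₁ N ≠ a₂ N := by
    have hmem : a₁ N * Θ ^ (1 * N) ≠ a₂ N * Θ ^ (1 * N) :=
      Nat.sInf_mem (hdist 1 1 le_rfl (hi.trans him) le_rfl (hj.trans hjm))
    exact fun h => hmem (by rw [h])
  have hpre : ∀ n < N, a₁ n = a₂ n := fun n hn =>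
    mul_right_cancel₀ (pow_ne_zero _ hΘ0) (not_not.mp (Nat.notMem_of_lt_sInf hn))
  by_contra! hlt
  have hagree : ∀ n ≤ N, a₁ n * Θ ^ (i * n) = a₂ n * Θ ^ (j * n) := fun n hn =>
    not_not.mp fun h => (Nat.sInf_le h).not_gt (hn.trans_lt hlt)
  exact lt_asymm
    (arg2pi_lt_of_eq_conj hΘ1 hu₁ hmin₁ (by omega)
      (fun n hn => (hagree n hn).symm) (fun n hn => (hpre n hn).symm) hN.symm)
    (arg2pi_lt_of_eq_conj hΘ1 hu₂ hmin₂ (by omega) hagree hpre hN)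

/-- Lemma of the paper.  Two distinct branches `k₁ ≠ k₂` with
Newton–Puiseux roots written over a common exponent denominator `M`
(index `n` ↔ exponent `n/M`, `m_k ∣ M`, supports in `(1/m_k)ℕ`).  The roots of
branch `k` are the conjugates `λ_{k,j}` with coefficient
`a_k(n)·Θ^{jn}` at index `n`, where `Θ = e^{2πi/M}` (this is
`a_α θ_k^{jαm_k}`, `θ_k = e^{2πi/m_k}`, `α = n/M`).  Order the roots of each
branch lexicographically by the sequences of arguments (in `[0,2π)`) of their
nonzero coefficients, and assume `λ_{k,1}` is minimal for this order.  Then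
`max_{i,j} O(λ_{k₁,i}, λ_{k₂,j}) = O(λ_{k₁,1}, λ_{k₂,1})`,
contact orders being measured by the first index where coefficients differ. -/
theorem stmt_3 (M m₁ m₂ : ℕ) (hM : 0 < M) (hm₁ : 0 < m₁) (hm₂ : 0 < m₂)
    (hd₁ : m₁ ∣ M) (hd₂ : m₂ ∣ M)
    (a₁ a₂ : ℕ → ℂ)
    (hsupp₁ : ∀ n, ¬ (M / m₁ ∣ n) → a₁ n = 0)
    (hsupp₂ : ∀ n, ¬ (M / m₂ ∣ n) → a₂ n = 0)
    (Θ : ℂ) (hΘ : Θ = Complex.exp (2 * Real.pi * Complex.I / M))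
    -- the two branches are distinct: every pair of roots differs somewhere
    (hdist : ∀ i j, 1 ≤ i → i ≤ m₁ → 1 ≤ j → j ≤ m₂ →
      ∃ n, a₁ n * Θ ^ (i * n) ≠ a₂ n * Θ ^ (j * n))
    -- `λ_{k,1}` is minimal for the lexicographic order on argument sequences
    (hmin₁ : ∀ j, 1 ≤ j → j ≤ m₁ →
      ¬ ArgLexLt (fun n => if a₁ n = 0 then 0 else arg2pi (a₁ n * Θ ^ (j * n)))
        (fun n => if a₁ n = 0 then 0 else arg2pi (a₁ n * Θ ^ (1 * n))))
    (hmin₂ : ∀ j, 1 ≤ j → j ≤ m₂ →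
      ¬ ArgLexLt (fun n => if a₂ n = 0 then 0 else arg2pi (a₂ n * Θ ^ (j * n)))
        (fun n => if a₂ n = 0 then 0 else arg2pi (a₂ n * Θ ^ (1 * n)))) :
    ∀ i j, 1 ≤ i → i ≤ m₁ → 1 ≤ j → j ≤ m₂ →
      sInf {n | a₁ n * Θ ^ (i * n) ≠ a₂ n * Θ ^ (j * n)} ≤
        sInf {n | a₁ n * Θ ^ (1 * n) ≠ a₂ n * Θ ^ (1 * n)} :=
  stmt_3_general M m₁ m₂ hd₁ hd₂ a₁ a₂ hsupp₁ hsupp₂ Θ hΘ hdist hmin₁ hmin₂
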